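/- (One-step sufficient decrease.) Suppose φ satisfies the stated assumption. Let S̄ ⊆ J, C̄ = {x ∈ ℝ^N : G_iᵀ x = 0 for all i ∈ J \ S̄}, and let x^k ∈ ℝ^N satisfy S(x^k) = S̄ (so x^k ∈ C̄ and G_iᵀ x^k ≠ 0 for all i ∈ S̄). Fix ρ > 0 and 0 < ε < 1, and define the linearized surrogate H(x) = Σ_{i∈S̄} [φ(|G_iᵀ x^k|) + φ'(|G_iᵀ x^k|)(|G_iᵀ x| − |G_iᵀ x^k|)] + (β/q)‖Ax − b‖_q^q + (ρ/2)‖x − x^k‖₂². Suppose x^{k+1} ∈ C̄ and h ∈ ℝ^N satisfy H(y) ≥ H(x^{k+1}) + ⟨h, y − x^{k+1}⟩ for all y ∈ C̄ (i.e., h is a subgradient at x^{k+1} of H restricted to C̄) and ‖h‖₂ ≤ (ρε/2)‖x^{k+1} − x^k‖₂. Then F(x^k) − F(x^{k+1}) ≥ (1 − ε)(ρ/2)‖x^{k+1} − x^k‖₂². -/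
import Mathlib


section Aux

/-- Tangent line lies above a concave function. -/
lemma phi_tangent_le {φ φ' : ℝ → ℝ} (hconc : ConcaveOn ℝ (Set.Ici 0) φ)
    (hder : ∀ t : ℝ, 0 < t → HasDerivAt φ (φ' t) t)
    {t s : ℝ} (ht : 0 < t) (hs : 0 ≤ s) : φ s ≤ φ t + φ' t * (s - t) := by
  rcases lt_trichotomy s t with hlt | rfl | hgt
  · have hsl := hconc.le_slope_of_hasDerivAt (Set.mem_Ici.mpr hs)
      (Set.mem_Ici.mpr ht.le) hlt (hder t ht)
    rw [slope_def_field] at hsl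
    have hd : (0:ℝ) < t - s := by linarith
    have := (le_div_iff₀ hd).mp hsl
    nlinarith
  · simp
  · have hsl := hconc.slope_le_of_hasDerivAt (Set.mem_Ici.mpr ht.le)
      (Set.mem_Ici.mpr hs) hgt (hder t ht)
    rw [slope_def_field] at hsl
    have hd : (0:ℝ) < s - t := by linarith
    have := (div_le_iff₀ hd).mp hsl
    nlinarith

end Aux

/-- The dot product `gᵀ x` of two vectors in `ℝ^N`. -/
noncomputable def dotp {N : ℕ} (g x : Fin N → ℝ) : ℝ := ∑ l, g l * x l

/-- The Euclidean norm `‖x‖₂` on `ℝ^N`. -/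
noncomputable def norm2 {N : ℕ} (x : Fin N → ℝ) : ℝ := Real.sqrt (∑ l, (x l) ^ 2)

/-- Assumptions on the potential function `φ` (with derivative `φ'` on `(0,∞)`):
continuous, concave and coercive on `[0,∞)` with `φ(0) = 0`; continuously
differentiable on `(0,∞)` with positive derivative there, `φ'(0⁺) = +∞`, and
`φ'` Lipschitz on every `[α,∞)` with `α > 0`. -/

structure PhiAssumption (φ φ' : ℝ → ℝ) : Prop where
  nonneg : ∀ t : ℝ, 0 ≤ t → 0 ≤ φ t
  zero : φ 0 = 0
  cont : ContinuousOn φ (Set.Ici 0)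
  concave : ConcaveOn ℝ (Set.Ici 0) φ
  coercive : Filter.Tendsto φ Filter.atTop Filter.atTop
  hasDeriv : ∀ t : ℝ, 0 < t → HasDerivAt φ (φ' t) t
  derivCont : ContinuousOn φ' (Set.Ioi 0)
  derivPos : ∀ t : ℝ, 0 < t → 0 < φ' t
  derivAtZero : Filter.Tendsto φ' (nhdsWithin 0 (Set.Ioi 0)) Filter.atTop
  derivLip : ∀ α : ℝ, 0 < α → ∃ L : ℝ, ∀ s : ℝ, α ≤ s → ∀ t : ℝ, α ≤ t →
    |φ' s - φ' t| ≤ L * |s - t|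

/-- The objective function
`F(x) = Σ_{i∈J} φ(|G_iᵀ x|) + (β/q) ‖Ax − b‖_q^q`. -/
noncomputable def objF {M N : ℕ} {ι : Type} [Fintype ι] (φ : ℝ → ℝ)
    (A : Matrix (Fin M) (Fin N) ℝ) (b : Fin M → ℝ) (G : ι → Fin N → ℝ)
    (β q : ℝ) (x : Fin N → ℝ) : ℝ :=
  (∑ i : ι, φ |dotp (G i) x|) + (β / q) * ∑ l, |A.mulVec x l - b l| ^ q

/-- The linearized, proximally regularized surrogate
`H(x) = Σ_{i∈S̄}[φ(|G_iᵀ x^k|) + φ'(|G_iᵀ x^k|)(|G_iᵀ x| − |G_iᵀ x^k|)]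
        + (β/q)‖Ax − b‖_q^q + (ρ/2)‖x − x^k‖₂²`. -/
noncomputable def surrogate {M N : ℕ} {ι : Type} [Fintype ι] (φ φ' : ℝ → ℝ)
    (A : Matrix (Fin M) (Fin N) ℝ) (b : Fin M → ℝ) (G : ι → Fin N → ℝ)
    (β q ρ : ℝ) (Sb : Finset ι) (xk x : Fin N → ℝ) : ℝ :=
  (∑ i ∈ Sb, (φ |dotp (G i) xk| +
      φ' |dotp (G i) xk| * (|dotp (G i) x| - |dotp (G i) xk|)))
    + (β / q) * (∑ l, |A.mulVec x l - b l| ^ q) + ρ / 2 * norm2 (x - xk) ^ 2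

/-- one-step sufficient decrease. If `S(x^k) = S̄`, `x^{k+1} ∈ C̄`,
and `h` is a subgradient at `x^{k+1}` of the surrogate `H` restricted to `C̄`
with `‖h‖₂ ≤ (ρε/2)‖x^{k+1} − x^k‖₂`, then
`F(x^k) − F(x^{k+1}) ≥ (1 − ε)(ρ/2)‖x^{k+1} − x^k‖₂²`. -/
theorem sufficient_decrease {M N : ℕ} {ι : Type} [Fintype ι]
    (A : Matrix (Fin M) (Fin N) ℝ) (b : Fin M → ℝ) (G : ι → Fin N → ℝ)
    (β q : ℝ) (hβ : 0 < β) (hq : 1 ≤ q)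
    (φ φ' : ℝ → ℝ) (hφ : PhiAssumption φ φ')
    (Sb : Finset ι) (ρ ε : ℝ) (hρ : 0 < ρ) (hε0 : 0 < ε) (hε1 : ε < 1)
    (xk xk1 h : Fin N → ℝ)
    (hsupp : ∀ i : ι, dotp (G i) xk ≠ 0 ↔ i ∈ Sb)
    (hxk1mem : ∀ i : ι, i ∉ Sb → dotp (G i) xk1 = 0)
    (hsubgrad : ∀ y : Fin N → ℝ, (∀ i : ι, i ∉ Sb → dotp (G i) y = 0) →
      surrogate φ φ' A b G β q ρ Sb xk y ≥
        surrogate φ φ' A b G β q ρ Sb xk xk1 + dotp h (y - xk1))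
    (hhnorm : norm2 h ≤ ρ * ε / 2 * norm2 (xk1 - xk)) :
    objF φ A b G β q xk - objF φ A b G β q xk1 ≥
      (1 - ε) * (ρ / 2) * norm2 (xk1 - xk) ^ 2 := by
  classical
  -- abbreviations
  set nd := norm2 (xk1 - xk) with hnd
  have hnd0 : 0 ≤ nd := Real.sqrt_nonneg _
  have hnsq : ∀ v : Fin N → ℝ, norm2 v ^ 2 = ∑ l, v l ^ 2 := by
    intro v
    exact Real.sq_sqrt (Finset.sum_nonneg fun l _ => sq_nonneg _)
  have hzero : ∀ i : ι, i ∉ Sb → dotp (G i) xk = 0 := by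
    intro i hi
    by_contra h'
    exact hi ((hsupp i).mp h')
  have hpos : ∀ i ∈ Sb, 0 < |dotp (G i) xk| := by
    intro i hi
    exact abs_pos.mpr ((hsupp i).mpr hi)
  -- objF as a sum over Sb
  have hFsum : ∀ y : Fin N → ℝ, (∀ i : ι, i ∉ Sb → dotp (G i) y = 0) →
      objF φ A b G β q y =
        (∑ i ∈ Sb, φ |dotp (G i) y|) + (β / q) * ∑ l, |A.mulVec y l - b l| ^ q := by
    intro y hy
    unfold objF
    congr 1
    exact (Finset.sum_subset (Finset.subset_univ Sb)
      (fun i _ hi => by simp [hy i hi, hφ.zero])).symm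
  -- surrogate at xk equals objF at xk
  have hSxk : surrogate φ φ' A b G β q ρ Sb xk xk = objF φ A b G β q xk := by
    rw [hFsum xk hzero]
    unfold surrogate
    have hn0 : norm2 (0 : Fin N → ℝ) = 0 := by simp [norm2]
    simp [sub_self, hn0]
  -- surrogate at xk1 dominates objF at xk1 plus prox term
  have hSxk1 : objF φ A b G β q xk1 + ρ / 2 * nd ^ 2 ≤
      surrogate φ φ' A b G β q ρ Sb xk xk1 := by
    rw [hFsum xk1 hxk1mem]
    unfold surrogate
    have hsum : (∑ i ∈ Sb, φ |dotp (G i) xk1|) ≤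
        ∑ i ∈ Sb, (φ |dotp (G i) xk| +
          φ' |dotp (G i) xk| * (|dotp (G i) xk1| - |dotp (G i) xk|)) := by
      apply Finset.sum_le_sum
      intro i hi
      exact phi_tangent_le hφ.concave hφ.hasDeriv (hpos i hi) (abs_nonneg _)
    linarith
  -- subgradient inequality at y = xk
  have hsub := hsubgrad xk hzero
  -- Cauchy-Schwarz
  have hcs : -(norm2 h * nd) ≤ dotp h (xk - xk1) := by
    have hCS := Real.sum_mul_le_sqrt_mul_sqrt Finset.univ h (fun l => xk1 l - xk l)
    have heq : dotp h (xk - xk1) = -(∑ l, h l * (xk1 l - xk l)) := by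
      unfold dotp
      rw [← Finset.sum_neg_distrib]
      apply Finset.sum_congr rfl
      intro l _
      simp [Pi.sub_apply]
      ring
    have hn2 : nd = Real.sqrt (∑ l, (xk1 l - xk l) ^ 2) := by
      simp [hnd, norm2, Pi.sub_apply]
    have hnh : norm2 h = Real.sqrt (∑ l, h l ^ 2) := rfl
    rw [heq, hn2, hnh]
    linarith
  have hhd : norm2 h * nd ≤ ρ * ε / 2 * nd * nd :=
    mul_le_mul_of_nonneg_right hhnorm hnd0
  have hchain : objF φ A b G β q xk ≥
      surrogate φ φ' A b G β q ρ Sb xk xk1 - ρ * ε / 2 * nd * nd := by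
    rw [← hSxk]
    have := hsub
    linarith
  have hfinal : objF φ A b G β q xk ≥
      objF φ A b G β q xk1 + ρ / 2 * nd ^ 2 - ρ * ε / 2 * nd * nd := by
    linarith
  have : nd ^ 2 = nd * nd := sq nd
  nlinarith
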